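/- Fix n ≥ 1, injective ρ-functions ρ^{(k)} for 1 ≤ k ≤ n, and the derived functions f_i (i ≤ n) on increasing (i+1)-tuples from ω_n as defined from the ρ^{(k)}. Then for every infinite A ⊆ ω_n there is an infinite B ⊆ A such that for every i ≤ n the restriction of f_i to increasing (i+1)-tuples from B is min-dependant: if α_0 < … < α_i and β_0 < … < β_i are in B and f_i(α_0,…,α_i) = f_i(β_0,…,β_i), then α_0 = β_0. -/

import Mathlib

/-- `ω_k` as an ordinal (`ω_0 = ω`). -/
noncomputable def omegaOrd (k : ℕ) : Ordinal := (Cardinal.aleph k).ord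

/-- A system of injective ρ-functions: for each `1 ≤ k ≤ n`, `ρ k` is symmetric on
distinct ordinals below `ω_k`, takes values below `ω_{k-1}`, and satisfies (a)
subadditivity, (b) injectivity in the first coordinate, and (c) `ρ(α,β) ≠ ρ(β,γ)`. -/
def IsRhoSystem (n : ℕ) (ρ : ℕ → Ordinal → Ordinal → Ordinal) : Prop :=
  ∀ k : ℕ, 1 ≤ k → k ≤ n →
    (∀ α β, α < omegaOrd k → β < omegaOrd k → α ≠ β → ρ k α β = ρ k β α) ∧
    (∀ α β, α < omegaOrd k → β < omegaOrd k → α ≠ β → ρ k α β < omegaOrd (k - 1)) ∧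
    (∀ α β γ, α < β → β < γ → γ < omegaOrd k →
      ρ k α β ≤ max (ρ k α γ) (ρ k β γ) ∧ ρ k α γ ≤ max (ρ k α β) (ρ k β γ)) ∧
    (∀ α α' β, α < β → α' < β → β < omegaOrd k → α ≠ α' → ρ k α β ≠ ρ k α' β) ∧
    (∀ α β γ, α < β → β < γ → γ < omegaOrd k → ρ k α β ≠ ρ k β γ)

/-- The functions `f_i` derived from the ρ-functions: `f_0(α) = α` and
`f_{i+1}(α_0,…,α_{i+1}) = ρ^{(n-i)}(f_i(α_0,…,α_i), f_i(α_1,…,α_{i+1}))`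
(with value `0` if the two arguments coincide).  A tuple `(α_0,…,α_i)` is
represented by a function `v : ℕ → Ordinal` via its first `i + 1` values. -/
noncomputable def fseq (n : ℕ) (ρ : ℕ → Ordinal → Ordinal → Ordinal) :
    ℕ → (ℕ → Ordinal) → Ordinal
  | 0, v => v 0
  | (i + 1), v =>
      if fseq n ρ i v = fseq n ρ i (fun j => v (j + 1)) then 0
      else ρ (n - i) (fseq n ρ i v) (fseq n ρ i (fun j => v (j + 1)))

/-!
Pass to an increasing `ω`-sequence in `A` and thin it out once for each level `i < n`.
Once `f_i` is min-dependent, Ramsey's theorem together with well-foundedness yields a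
subsequence on which `f_i(α_0,…,α_i) < f_i(α_1,…,α_{i+1})`, so `f_{i+1}(α) = ρ(x, y)` with
`x < y`; by (b) and min-dependence of `f_i`, changing only `α_0` then changes `f_{i+1}(α)`.
A second application of Ramsey's theorem makes the equality `f_{i+1}(α) = f_{i+1}(β)` depend
only on how the two tuples interleave. If it held with `α_0 < β_0`, moving `α_0` to a
neighbouring term of the sequence would keep the interleaving, hence the equality, although
it changes `f_{i+1}(α)`.
-/

open Set Function

lemma omegaOrd_pos (k : ℕ) : 0 < omegaOrd k :=
  Cardinal.ord_pos.2 (Cardinal.aleph_pos k)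

section Fseq

variable {n : ℕ} {ρ : ℕ → Ordinal → Ordinal → Ordinal}

lemma fseq_congr :
    ∀ {i : ℕ} {v w : ℕ → Ordinal}, EqOn v w (Iic i) → fseq n ρ i v = fseq n ρ i w
  | 0, _, _, h => h (mem_Iic.2 le_rfl)
  | i + 1, v, w, h => by
    have h₁ : fseq n ρ i v = fseq n ρ i w := fseq_congr (h.mono (Iic_subset_Iic.2 i.le_succ))
    have h₂ : fseq n ρ i (fun j => v (j + 1)) = fseq n ρ i (fun j => w (j + 1)) :=
      fseq_congr fun j hj => h (Nat.succ_le_succ hj)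
    simp only [fseq, h₁, h₂]

lemma fseq_succ_of_ne {i : ℕ} {v : ℕ → Ordinal}
    (h : fseq n ρ i v ≠ fseq n ρ i (fun j => v (j + 1))) :
    fseq n ρ (i + 1) v = ρ (n - i) (fseq n ρ i v) (fseq n ρ i (fun j => v (j + 1))) := by
  rw [fseq, if_neg h]

lemma fseq_lt_omegaOrd (hρ : IsRhoSystem n ρ) :
    ∀ {i : ℕ}, i ≤ n → ∀ {v : ℕ → Ordinal}, (∀ j ≤ i, v j < omegaOrd n) →
      fseq n ρ i v < omegaOrd (n - i)
  | 0, _, v, hv => hv 0 le_rfl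
  | i + 1, hi, v, hv => by
    have hx : fseq n ρ i v < omegaOrd (n - i) :=
      fseq_lt_omegaOrd hρ (by omega) fun j hj => hv j (by omega)
    have hy : fseq n ρ i (fun j => v (j + 1)) < omegaOrd (n - i) :=
      fseq_lt_omegaOrd hρ (by omega) fun j hj => hv (j + 1) (by omega)
    rw [fseq]
    split_ifs with h
    · exact omegaOrd_pos _
    · have := (hρ (n - i) (by omega) (by omega)).2.1 _ _ hx hy h
      rwa [show n - i - 1 = n - (i + 1) by omega] at this

end Fseq

def seqCons (x : ℕ) (χ : ℕ → ℕ) : ℕ → ℕ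
  | 0 => x
  | j + 1 => χ j

lemma StrictMonoOn.exists_strictMono_eqOn_Iic {σ : ℕ → ℕ} {r : ℕ}
    (hσ : StrictMonoOn σ (Iic r)) : ∃ σ' : ℕ → ℕ, StrictMono σ' ∧ EqOn σ σ' (Iic r) := by
  refine ⟨fun t => if t ≤ r then σ t else σ r + (t - r), strictMono_nat_of_lt_succ fun t => ?_,
    fun t ht => by simp [mem_Iic.1 ht]⟩
  by_cases ht : t + 1 ≤ r
  · simp only [ht, show t ≤ r by omega, if_true]
    exact hσ (mem_Iic.2 (by omega)) (mem_Iic.2 ht) (lt_add_one t)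
  · by_cases htr : t = r
    · subst htr
      simp
    · simp only [ht, show ¬t ≤ r by omega, if_false]
      omega

lemma exists_strictMono_diagonal (Q : ℕ → (ℕ → ℕ) → Prop)
    (hQ : ∀ x χ (θ : ℕ → ℕ), Q x χ → StrictMono θ → Q x (χ ∘ θ))
    (hthin : ∀ x χ, ∃ φ : ℕ → ℕ, StrictMono φ ∧ Q x (χ ∘ φ)) :
    ∃ a : ℕ → ℕ, StrictMono a ∧ ∀ k, Q (a k) (fun t => a (k + 1 + t)) := by
  choose φ hφ hQφ using hthin
  let next (ψ : ℕ → ℕ) : ℕ → ℕ := ψ ∘ Nat.succ ∘ φ (ψ 0) (ψ ∘ Nat.succ)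
  let Ψ : ℕ → ℕ → ℕ := fun k => next^[k] id
  have hΨ_succ (k : ℕ) : Ψ (k + 1) = next (Ψ k) := iterate_succ_apply' next k id
  have hΨ_mono (k : ℕ) : StrictMono (Ψ k) := by
    induction k with
    | zero => exact strictMono_id
    | succ k ih =>
      rw [hΨ_succ]
      exact ih.comp (StrictMono.comp (g := Nat.succ) (fun _ _ => Nat.succ_lt_succ) (hφ _ _))
  have hΨ_factor (k l : ℕ) : ∃ θ, Ψ (k + l) = Ψ k ∘ θ := by
    induction l with
    | zero => exact ⟨id, rfl⟩
    | succ l ih =>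
      obtain ⟨θ, hθ⟩ := ih
      exact ⟨θ ∘ Nat.succ ∘ φ _ _, by rw [← add_assoc, hΨ_succ, hθ]; rfl⟩
  have ha : StrictMono fun k => Ψ k 0 := strictMono_nat_of_lt_succ fun k => by
    rw [hΨ_succ]
    exact hΨ_mono k (Nat.succ_pos _)
  refine ⟨fun k => Ψ k 0, ha, fun k => ?_⟩
  choose θ hθ using hΨ_factor (k + 1)
  have htail : (fun t => Ψ (k + 1 + t) 0) = Ψ (k + 1) ∘ fun t => θ t 0 :=
    funext fun t => congrFun (hθ t) 0
  have hθ_mono : StrictMono fun t => θ t 0 := fun s t hst => by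
    have h : Ψ (k + 1 + s) 0 < Ψ (k + 1 + t) 0 := ha (by omega)
    rw [hθ s, hθ t] at h
    exact (hΨ_mono (k + 1)).lt_iff_lt.1 h
  rw [htail, hΨ_succ]
  exact hQ _ _ _ (hQφ (Ψ k 0) (Ψ k ∘ Nat.succ)) hθ_mono

theorem exists_strictMono_forall_color_eq {C : Type*} [Finite C] :
    ∀ (m : ℕ) (c : (ℕ → ℕ) → C), (∀ σ τ, EqOn σ τ (Iio m) → c σ = c τ) →
      ∃ φ : ℕ → ℕ, StrictMono φ ∧ ∃ k, ∀ σ, StrictMono σ → c (φ ∘ σ) = k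
  | 0, c, hc => ⟨id, strictMono_id, c id, fun σ _ => hc _ _ fun j hj => absurd hj j.not_lt_zero⟩
  | m + 1, c, hc => by
    obtain ⟨a, ha, hhead⟩ := exists_strictMono_diagonal
      (fun x χ => ∃ k, ∀ σ, StrictMono σ → c (seqCons x (χ ∘ σ)) = k)
      (fun x χ θ ⟨k, hk⟩ hθ => ⟨k, fun σ hσ => hk (θ ∘ σ) (hθ.comp hσ)⟩)
      (fun x χ => exists_strictMono_forall_color_eq m (fun τ => c (seqCons x (χ ∘ τ)))
        fun τ τ' h => hc _ _ fun
          | 0, _ => rfl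
          | j + 1, hj => congrArg χ (h (Nat.succ_lt_succ_iff.1 hj)))
    choose K hK using hhead
    obtain ⟨y, hy⟩ := Finite.exists_infinite_fiber K
    obtain ⟨θ, hθ, hθy⟩ := Filter.extraction_of_frequently_atTop
      (Nat.frequently_atTop_iff_infinite.2 (infinite_coe_iff.1 hy))
    refine ⟨a ∘ θ, ha.comp hθ, y, fun σ hσ => ?_⟩
    set k := θ (σ 0)
    have hk : ∀ j, k < θ (σ (j + 1)) := fun j => hθ (hσ j.succ_pos)
    have hsplit : (a ∘ θ) ∘ σ =
        seqCons (a k) ((fun t => a (k + 1 + t)) ∘ fun j => θ (σ (j + 1)) - (k + 1)) := by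
      funext j
      cases j with
      | zero => rfl
      | succ j => simp only [seqCons, comp_apply, Nat.add_sub_cancel' (hk j)]
    have hτ : StrictMono fun j => θ (σ (j + 1)) - (k + 1) := fun i j hij => by
      have := hθ (hσ (show i + 1 < j + 1 by omega))
      have := hk i
      simp only
      omega
    rw [hsplit, hK k _ hτ]
    exact hθy (σ 0)

theorem exists_strictMono_forall_color_eq_of_strictMonoOn {C : Type*} [Finite C] (r : ℕ)
    (c : (ℕ → ℕ) → C) (hc : ∀ σ τ, EqOn σ τ (Iic r) → c σ = c τ) :
    ∃ φ : ℕ → ℕ, StrictMono φ ∧ ∃ k, ∀ σ, StrictMonoOn σ (Iic r) → c (φ ∘ σ) = k := by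
  obtain ⟨φ, hφ, k, hk⟩ := exists_strictMono_forall_color_eq (r + 1) c
    fun σ τ h => hc σ τ fun j hj => h (Nat.lt_succ_of_le hj)
  refine ⟨φ, hφ, k, fun σ hσ => ?_⟩
  obtain ⟨σ', hσ', hσσ'⟩ := hσ.exists_strictMono_eqOn_Iic
  rw [hc _ _ (hσσ'.comp_left), hk σ' hσ']

theorem exists_strictMono_pattern_eq {β : Type*} (r N : ℕ) (g : (ℕ → ℕ) → β)
    (hg : ∀ σ τ, EqOn σ τ (Iic r) → g σ = g τ) :
    ∃ φ : ℕ → ℕ, StrictMono φ ∧ ∀ Z Z' P Q : ℕ → ℕ, StrictMono Z → StrictMono Z' →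
      (∀ j ≤ r, P j < N) → (∀ j ≤ r, Q j < N) →
      g (φ ∘ Z ∘ P) = g (φ ∘ Z ∘ Q) → g (φ ∘ Z' ∘ P) = g (φ ∘ Z' ∘ Q) := by
  -- A sequence `z` is coloured by the pairs of index patterns on which `g` takes equal values.
  let toSeq (P : Fin (r + 1) → Fin N) : ℕ → ℕ := fun j => P (Fin.ofNat (r + 1) j)
  obtain ⟨φ, hφ, k, hk⟩ := exists_strictMono_forall_color_eq N
    (fun z (PQ : (Fin (r + 1) → Fin N) × (Fin (r + 1) → Fin N)) =>
      g (z ∘ toSeq PQ.1) = g (z ∘ toSeq PQ.2))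
    fun z z' h => funext fun PQ => by
      have hz : ∀ P, z ∘ toSeq P = z' ∘ toSeq P := fun P => funext fun _ => h (Fin.isLt _)
      simp only [hz]
  refine ⟨φ, hφ, fun Z Z' P Q hZ hZ' hP hQ hZPQ => ?_⟩
  have hpattern : ∀ P : ℕ → ℕ, (∀ j ≤ r, P j < N) →
      ∃ P' : Fin (r + 1) → Fin N, ∀ z : ℕ → ℕ, g (z ∘ toSeq P') = g (z ∘ P) := fun P hP =>
    ⟨fun j => ⟨P j, hP j (Nat.lt_succ_iff.1 j.isLt)⟩, fun z => hg _ _ fun j hj => by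
      simp [toSeq, Nat.mod_eq_of_lt (Nat.lt_succ_of_le (mem_Iic.1 hj))]⟩
  obtain ⟨P', hP'⟩ := hpattern P hP
  obtain ⟨Q', hQ'⟩ := hpattern Q hQ
  have := congrFun ((hk Z hZ).trans (hk Z' hZ').symm) (P', Q')
  simp only [hP', hQ'] at this
  exact this.mp hZPQ

theorem Finset.exists_strictMono_index (s : Finset ℕ) :
    ∃ Z pos : ℕ → ℕ, StrictMono Z ∧ ∀ x ∈ s, pos x < s.card ∧ Z (pos x) = x := by
  classical
  let p : ℕ → Prop := fun y => y ∈ s ∨ s.sup id < y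
  have hp : (Set.ofPred p).Infinite := (Set.Ioi_infinite _).mono fun y hy => Or.inr hy
  refine ⟨Nat.nth p, Nat.count p, Nat.nth_strictMono hp,
    fun x hx => ⟨?_, Nat.nth_count (Or.inl hx)⟩⟩
  rw [Nat.count_eq_card_filter_range]
  refine Finset.card_lt_card
    (Finset.ssubset_iff_of_subset (fun y hy => ?_) |>.2 ⟨x, hx, by simp⟩)
  obtain ⟨hyx, hy | hy⟩ := Finset.mem_filter.1 hy
  · exact hy
  · have : x ≤ s.sup id := Finset.le_sup (f := id) hx
    simp only [Finset.mem_range] at hyx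
    omega

lemma exists_strictMono_factor_pair (r : ℕ) (σ τ : ℕ → ℕ) :
    ∃ Z P Q : ℕ → ℕ, StrictMono Z ∧ EqOn (Z ∘ P) σ (Iic r) ∧ EqOn (Z ∘ Q) τ (Iic r) ∧
      (∀ j ≤ r, P j < 2 * (r + 1)) ∧ (∀ j ≤ r, Q j < 2 * (r + 1)) := by
  classical
  let s : Finset ℕ := (Finset.range (r + 1)).image σ ∪ (Finset.range (r + 1)).image τ
  have hs : s.card ≤ 2 * (r + 1) := (Finset.card_union_le _ _).trans <| by
    rw [two_mul]
    exact add_le_add (Finset.card_image_le.trans_eq (Finset.card_range _))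
      (Finset.card_image_le.trans_eq (Finset.card_range _))
  have hσs : ∀ j ≤ r, σ j ∈ s := fun j hj =>
    Finset.mem_union_left _ (Finset.mem_image_of_mem σ (Finset.mem_range.2 (by omega)))
  have hτs : ∀ j ≤ r, τ j ∈ s := fun j hj =>
    Finset.mem_union_right _ (Finset.mem_image_of_mem τ (Finset.mem_range.2 (by omega)))
  obtain ⟨Z, pos, hZ, hpos⟩ := s.exists_strictMono_index
  exact ⟨Z, pos ∘ σ, pos ∘ τ, hZ, fun j hj => (hpos _ (hσs j hj)).2,
    fun j hj => (hpos _ (hτs j hj)).2, fun j hj => (hpos _ (hσs j hj)).1.trans_le hs,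
    fun j hj => (hpos _ (hτs j hj)).1.trans_le hs⟩

lemma exists_strictMono_pair_eq_off (p : ℕ) :
    ∃ w₁ w₂ : ℕ → ℕ, StrictMono w₁ ∧ StrictMono w₂ ∧ w₁ p ≠ w₂ p ∧ ∀ t ≠ p, w₁ t = w₂ t := by
  refine ⟨fun t => if t < p then t else t + 1, fun t => if t ≤ p then t else t + 1,
    fun s t hst => ?_, fun s t hst => ?_, by simp, fun t ht => ?_⟩ <;>
    simp only <;> split_ifs <;> omega

section MinDependent

variable {n : ℕ} {ρ : ℕ → Ordinal → Ordinal → Ordinal} {i : ℕ} {b : ℕ → Ordinal}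

def MinDependent (n : ℕ) (ρ : ℕ → Ordinal → Ordinal → Ordinal) (i : ℕ) (b : ℕ → Ordinal) :
    Prop :=
  ∀ σ τ : ℕ → ℕ, StrictMonoOn σ (Iic i) → StrictMonoOn τ (Iic i) →
    fseq n ρ i (b ∘ σ) = fseq n ρ i (b ∘ τ) → σ 0 = τ 0

def ShiftIncreasing (n : ℕ) (ρ : ℕ → Ordinal → Ordinal → Ordinal) (i : ℕ) (b : ℕ → Ordinal) :
    Prop :=
  ∀ σ : ℕ → ℕ, StrictMonoOn σ (Iic (i + 1)) →
    fseq n ρ i (b ∘ σ) < fseq n ρ i (fun j => b (σ (j + 1)))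

lemma minDependent_zero (hb : Injective b) : MinDependent n ρ 0 b :=
  fun _ _ _ _ h => hb h

lemma MinDependent.comp (hmin : MinDependent n ρ i b) {φ : ℕ → ℕ} (hφ : StrictMono φ) :
    MinDependent n ρ i (b ∘ φ) := fun σ τ hσ hτ h =>
  hφ.injective (hmin (φ ∘ σ) (φ ∘ τ) (hφ.comp_strictMonoOn hσ) (hφ.comp_strictMonoOn hτ) h)

lemma ShiftIncreasing.comp (hshift : ShiftIncreasing n ρ i b) {φ : ℕ → ℕ} (hφ : StrictMono φ) :
    ShiftIncreasing n ρ i (b ∘ φ) := fun σ hσ =>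
  hshift (φ ∘ σ) (hφ.comp_strictMonoOn hσ)

lemma MinDependent.eq_of_mem_range (hmin : MinDependent n ρ i b) (hb : StrictMono b)
    {v w : ℕ → Ordinal} (hv : ∀ j ≤ i, v j ∈ range b) (hw : ∀ j ≤ i, w j ∈ range b)
    (hv_mono : StrictMonoOn v (Iic i)) (hw_mono : StrictMonoOn w (Iic i))
    (h : fseq n ρ i v = fseq n ρ i w) : v 0 = w 0 := by
  have hindex : ∀ u : ℕ → Ordinal, (∀ j ≤ i, u j ∈ range b) → StrictMonoOn u (Iic i) →
      StrictMonoOn (invFun b ∘ u) (Iic i) ∧ EqOn (b ∘ invFun b ∘ u) u (Iic i) := by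
    intro u hu hu_mono
    have heq : EqOn (b ∘ invFun b ∘ u) u (Iic i) := fun j hj => invFun_eq (hu j hj)
    refine ⟨fun j hj k hk hjk => hb.lt_iff_lt.1 ?_, heq⟩
    have := hu_mono hj hk hjk
    rwa [← heq hj, ← heq hk] at this
  obtain ⟨hσ, hσv⟩ := hindex v hv hv_mono
  obtain ⟨hτ, hτw⟩ := hindex w hw hw_mono
  have h0 := hmin _ _ hσ hτ (by rw [fseq_congr hσv, fseq_congr hτw, h])
  rw [← hσv (mem_Iic.2 (Nat.zero_le i)), ← hτw (mem_Iic.2 (Nat.zero_le i))]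
  exact congrArg b h0

theorem MinDependent.exists_shiftIncreasing (hmin : MinDependent n ρ i b) :
    ∃ φ : ℕ → ℕ, StrictMono φ ∧ ShiftIncreasing n ρ i (b ∘ φ) := by
  obtain ⟨φ, hφ, k, hk⟩ := exists_strictMono_forall_color_eq_of_strictMonoOn (i + 1)
    (fun σ => fseq n ρ i (b ∘ σ) < fseq n ρ i (fun j => b (σ (j + 1))))
    fun σ τ h => by
      rw [fseq_congr (h.comp_left.mono (Iic_subset_Iic.2 i.le_succ)),
        fseq_congr (v := fun j => b (σ (j + 1))) fun j hj => congrArg b (h (Nat.succ_le_succ hj))]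
  refine ⟨φ, hφ, fun σ hσ => (hk σ hσ).mpr ?_⟩
  by_contra hfalse
  let shift (t : ℕ) : ℕ → ℕ := fun j => j + t
  have hshift_mono (t : ℕ) : StrictMono (shift t) := strictMono_id.add_const t
  refine not_strictAnti_of_wellFoundedLT (fun t => fseq n ρ i (b ∘ φ ∘ shift t))
    (strictAnti_nat_of_succ_lt fun t => lt_of_le_of_ne ?_ fun h => ?_)
  · have hnext : (fun j => b ((φ ∘ shift t) (j + 1))) = b ∘ φ ∘ shift (t + 1) :=
      funext fun j => congrArg (fun m => b (φ m)) (by simp only [shift]; omega)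
    have := hk (shift t) ((hshift_mono t).strictMonoOn _) ▸ hfalse
    rw [hnext] at this
    exact not_lt.1 this
  · have := (hmin.comp hφ) _ _ ((hshift_mono _).strictMonoOn _) ((hshift_mono _).strictMonoOn _) h
    simp [shift] at this

theorem fseq_succ_ne_of_eqOn_Ioc (hρ : IsRhoSystem n ρ) (hi : i + 1 ≤ n)
    (hb : ∀ t, b t < omegaOrd n) (hmin : MinDependent n ρ i b) (hshift : ShiftIncreasing n ρ i b)
    {u₁ u₂ : ℕ → ℕ} (hu₁ : StrictMonoOn u₁ (Iic (i + 1))) (hu₂ : StrictMonoOn u₂ (Iic (i + 1)))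
    (htail : EqOn u₁ u₂ (Ioc 0 (i + 1))) (hhead : u₁ 0 ≠ u₂ 0) :
    fseq n ρ (i + 1) (b ∘ u₁) ≠ fseq n ρ (i + 1) (b ∘ u₂) := by
  have hsub : Iic i ⊆ Iic (i + 1) := Iic_subset_Iic.2 i.le_succ
  have hy : fseq n ρ i (fun j => (b ∘ u₁) (j + 1)) = fseq n ρ i (fun j => (b ∘ u₂) (j + 1)) :=
    fseq_congr fun j hj => congrArg b (htail ⟨j.succ_pos, Nat.succ_le_succ hj⟩)
  have hx : fseq n ρ i (b ∘ u₁) ≠ fseq n ρ i (b ∘ u₂) := fun h =>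
    hhead (hmin u₁ u₂ (hu₁.mono hsub) (hu₂.mono hsub) h)
  have hlt₁ := hshift u₁ hu₁
  have hlt₂ := hshift u₂ hu₂
  rw [fseq_succ_of_ne hlt₁.ne, fseq_succ_of_ne hlt₂.ne, ← hy]
  exact (hρ (n - i) (by omega) (by omega)).2.2.2.1 _ _ _ hlt₁ (hlt₂.trans_eq hy.symm)
    (fseq_lt_omegaOrd hρ (by omega) fun j _ => hb _) hx

theorem MinDependent.exists_succ_of_shiftIncreasing (hρ : IsRhoSystem n ρ) (hi : i + 1 ≤ n)
    (hb : ∀ t, b t < omegaOrd n) (hmin : MinDependent n ρ i b) (hshift : ShiftIncreasing n ρ i b) :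
    ∃ φ : ℕ → ℕ, StrictMono φ ∧ MinDependent n ρ (i + 1) (b ∘ φ) := by
  obtain ⟨φ, hφ, hpattern⟩ := exists_strictMono_pattern_eq (i + 1) (2 * (i + 2))
    (fun u => fseq n ρ (i + 1) (b ∘ u)) fun σ τ h => fseq_congr h.comp_left
  refine ⟨φ, hφ, ?_⟩
  suffices key : ∀ σ τ : ℕ → ℕ, StrictMonoOn σ (Iic (i + 1)) → StrictMonoOn τ (Iic (i + 1)) →
      fseq n ρ (i + 1) (b ∘ φ ∘ σ) = fseq n ρ (i + 1) (b ∘ φ ∘ τ) → ¬σ 0 < τ 0 from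
    fun σ τ hσ hτ h => le_antisymm (not_lt.1 (key τ σ hτ hσ h.symm)) (not_lt.1 (key σ τ hσ hτ h))
  intro σ τ hσ hτ h h0
  obtain ⟨Z, P, Q, hZ, hZP, hZQ, hP_lt, hQ_lt⟩ := exists_strictMono_factor_pair (i + 1) σ τ
  have hP : StrictMonoOn P (Iic (i + 1)) := fun j hj k hk hjk => hZ.lt_iff_lt.1 (by
    have := hσ hj hk hjk
    rwa [← hZP hj, ← hZP hk] at this)
  have h0_mem : 0 ∈ Iic (i + 1) := mem_Iic.2 (Nat.zero_le _)
  have hP_ne : ∀ j ∈ Ioc 0 (i + 1), P j ≠ P 0 := fun j hj hPj => by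
    have := congrArg Z hPj
    rw [show Z (P j) = σ j from hZP hj.2, show Z (P 0) = σ 0 from hZP h0_mem] at this
    exact (hσ h0_mem (mem_Iic.2 hj.2) hj.1).ne' this
  have hQ_ne : ∀ j ≤ i + 1, Q j ≠ P 0 := fun j hj hQj => by
    have := congrArg Z hQj
    rw [show Z (Q j) = τ j from hZQ hj, show Z (P 0) = σ 0 from hZP h0_mem] at this
    exact (h0.trans_le (hτ.monotoneOn h0_mem hj (Nat.zero_le j))).ne' this
  have hZPQ : fseq n ρ (i + 1) (b ∘ (φ ∘ Z ∘ P)) = fseq n ρ (i + 1) (b ∘ (φ ∘ Z ∘ Q)) :=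
    (fseq_congr (hZP.comp_left (g := b ∘ φ))).trans
      (h.trans (fseq_congr (hZQ.comp_left (g := b ∘ φ))).symm)
  have hmove : ∀ w : ℕ → ℕ, StrictMono w →
      fseq n ρ (i + 1) (b ∘ (φ ∘ (Z ∘ w) ∘ P)) = fseq n ρ (i + 1) (b ∘ (φ ∘ (Z ∘ w) ∘ Q)) :=
    fun w hw => hpattern Z (Z ∘ w) P Q hZ (hZ.comp hw) hP_lt hQ_lt hZPQ
  -- `Z ∘ w₁` and `Z ∘ w₂` differ only at the position of `σ 0`, which `τ` does not occupy.
  obtain ⟨w₁, w₂, hw₁, hw₂, hw_ne, hw_eq⟩ := exists_strictMono_pair_eq_off (P 0)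
  have hQw : fseq n ρ (i + 1) (b ∘ (φ ∘ (Z ∘ w₁) ∘ Q)) =
      fseq n ρ (i + 1) (b ∘ (φ ∘ (Z ∘ w₂) ∘ Q)) :=
    fseq_congr fun j hj => by simp only [comp_apply, hw_eq _ (hQ_ne j hj)]
  exact fseq_succ_ne_of_eqOn_Ioc hρ hi (fun t => hb _) (hmin.comp hφ) (hshift.comp hφ)
    ((hZ.comp hw₁).comp_strictMonoOn hP) ((hZ.comp hw₂).comp_strictMonoOn hP)
    (fun j hj => by simp only [comp_apply, hw_eq _ (hP_ne j hj)]) (hZ.injective.ne hw_ne)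
    ((hmove w₁ hw₁).trans (hQw.trans (hmove w₂ hw₂).symm))

theorem MinDependent.exists_succ (hρ : IsRhoSystem n ρ) (hi : i + 1 ≤ n)
    (hb : ∀ t, b t < omegaOrd n) (hmin : MinDependent n ρ i b) :
    ∃ φ : ℕ → ℕ, StrictMono φ ∧ MinDependent n ρ (i + 1) (b ∘ φ) := by
  obtain ⟨φ₁, hφ₁, hshift⟩ := hmin.exists_shiftIncreasing
  obtain ⟨φ₂, hφ₂, hsucc⟩ :=
    (hmin.comp hφ₁).exists_succ_of_shiftIncreasing hρ hi (fun t => hb _) hshift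
  exact ⟨φ₁ ∘ φ₂, hφ₁.comp hφ₂, hsucc⟩

theorem exists_strictMono_forall_minDependent (hρ : IsRhoSystem n ρ) (hb : Injective b)
    (hbn : ∀ t, b t < omegaOrd n) :
    ∀ i ≤ n, ∃ φ : ℕ → ℕ, StrictMono φ ∧ ∀ j ≤ i, MinDependent n ρ j (b ∘ φ)
  | 0, _ => ⟨id, strictMono_id, fun j hj => by
      obtain rfl : j = 0 := Nat.le_zero.1 hj
      exact minDependent_zero hb⟩
  | i + 1, hi => by
    obtain ⟨φ, hφ, hmin⟩ := exists_strictMono_forall_minDependent hρ hb hbn i (by omega)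
    obtain ⟨ψ, hψ, hsucc⟩ := (hmin i le_rfl).exists_succ hρ hi fun t => hbn _
    refine ⟨φ ∘ ψ, hφ.comp hψ, fun j hj => ?_⟩
    rcases Nat.le_succ_iff.1 hj with hj | rfl
    · exact (hmin j hj).comp hψ
    · exact hsucc

end MinDependent

theorem Set.Infinite.exists_strictMono_mem {α : Type*} [LinearOrder α] [WellFoundedLT α]
    {A : Set α} (hA : A.Infinite) : ∃ a : ℕ → α, StrictMono a ∧ ∀ k, a k ∈ A := by
  have := hA.to_subtype
  obtain ⟨f, hf | hf⟩ := Infinite.exists_strictMono_or_strictAnti A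
  · exact ⟨Subtype.val ∘ f, Subtype.strictMono_coe _ |>.comp hf, fun k => (f k).2⟩
  · exact (not_strictAnti_of_wellFoundedLT f hf).elim

theorem stmt6_general (n : ℕ) (ρ : ℕ → Ordinal → Ordinal → Ordinal)
    (hρ : IsRhoSystem n ρ)
    (A : Set Ordinal) (hA : A ⊆ Set.Iio (omegaOrd n)) (hAinf : A.Infinite) :
    ∃ B ⊆ A, B.Infinite ∧
      ∀ i ≤ n, ∀ v w : ℕ → Ordinal,
        (∀ j, j ≤ i → v j ∈ B) → (∀ j, j < i → v j < v (j + 1)) →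
        (∀ j, j ≤ i → w j ∈ B) → (∀ j, j < i → w j < w (j + 1)) →
        fseq n ρ i v = fseq n ρ i w → v 0 = w 0 := by
  obtain ⟨a, ha, haA⟩ := hAinf.exists_strictMono_mem
  obtain ⟨φ, hφ, hmin⟩ :=
    exists_strictMono_forall_minDependent hρ ha.injective (fun t => hA (haA t)) n le_rfl
  refine ⟨range (a ∘ φ), range_subset_iff.2 fun t => haA _,
    infinite_range_of_injective (ha.comp hφ).injective, fun i hi v w hv hv_lt hw hw_lt h => ?_⟩
  exact (hmin i hi).eq_of_mem_range (ha.comp hφ) hv hw (strictMonoOn_Iic_of_lt_succ hv_lt)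
    (strictMonoOn_Iic_of_lt_succ hw_lt) h

/-- For every infinite `A ⊆ ω_n` there is an infinite `B ⊆ A` on which every `f_i`
(`i ≤ n`) is min-dependant: if `α_0 < … < α_i` and `β_0 < … < β_i` are in `B` and
`f_i(α_0,…,α_i) = f_i(β_0,…,β_i)`, then `α_0 = β_0`. -/
theorem stmt6 (n : ℕ) (hn : 1 ≤ n) (ρ : ℕ → Ordinal → Ordinal → Ordinal)
    (hρ : IsRhoSystem n ρ)
    (A : Set Ordinal) (hA : A ⊆ Set.Iio (omegaOrd n)) (hAinf : A.Infinite) :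
    ∃ B ⊆ A, B.Infinite ∧
      ∀ i ≤ n, ∀ v w : ℕ → Ordinal,
        (∀ j, j ≤ i → v j ∈ B) → (∀ j, j < i → v j < v (j + 1)) →
        (∀ j, j ≤ i → w j ∈ B) → (∀ j, j < i → w j < w (j + 1)) →
        fseq n ρ i v = fseq n ρ i w → v 0 = w 0 :=
  stmt6_general n ρ hρ A hA hAinf
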